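/- arXiv:1902.07328 — 3 statements merged into one kernel-verified Lean document; each statement's English description precedes it below -/
import Mathlib

section
/- Let a > 0 and consider the recurrence x(n+1) = x(n) − a·x(n-1) for n ≥ 1. If a ≤ 1, then for any initial values x(0), x(1) there exists M (depending only on x(0), x(1), a) such that |x(n)| ≤ M for all n; specifically, when a ≤ 1 all solutions are bounded. -/
/-!
The characteristic polynomial of the recurrence is `λ² - λ + a`.

If `a ≤ 1/4` it has real roots `s ≤ r = 1 - s` with `0 ≤ s ≤ 1/2`. Then
`y n = x (n+1) - s * x n` is geometric with ratio `r ≤ 1`, hence bounded, and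
`x (n+1) = s * x n + y n` is a contraction perturbed by a bounded term.

If `a > 1/4` the quadratic form `u² - u v + a v²` is positive definite, and its value at
`(x (n+1), x n)` gets multiplied by `a ≤ 1` at each step.
-/

lemma abs_le_max_of_abs_succ_le {x : ℕ → ℝ} {s C : ℝ} (hs0 : 0 ≤ s) (hs1 : s < 1)
    (hx : ∀ n, |x (n + 1)| ≤ s * |x n| + C) (n : ℕ) : |x n| ≤ max |x 0| (C / (1 - s)) := by
  induction n with
  | zero => exact le_max_left _ _
  | succ k ih =>
    have hC : C ≤ (1 - s) * max |x 0| (C / (1 - s)) := by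
      rw [← div_le_iff₀' (by linarith)]
      exact le_max_right _ _
    calc |x (k + 1)| ≤ s * |x k| + C := hx k
      _ ≤ s * max |x 0| (C / (1 - s)) + (1 - s) * max |x 0| (C / (1 - s)) := by gcongr
      _ = max |x 0| (C / (1 - s)) := by ring

section Recurrence

variable {a : ℝ} {x : ℕ → ℝ}

lemma exists_bound_of_root_mem_Ico (hrec : ∀ n, x (n + 2) = x (n + 1) - a * x n) {s : ℝ}
    (hs : s ^ 2 - s + a = 0) (hs0 : 0 ≤ s) (hs1 : s < 1) : ∃ M : ℝ, ∀ n, |x n| ≤ M := by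
  set y : ℕ → ℝ := fun n => x (n + 1) - s * x n with hy
  have hy_succ : ∀ n, y (n + 1) = (1 - s) * y n := by
    intro n
    simp only [hy, hrec n]
    linear_combination (-x n) * hs
  have hy_le : ∀ n, |y n| ≤ |y 0| := by
    refine fun n => antitone_nat_of_succ_le (f := fun n => |y n|) (fun n => ?_) (Nat.zero_le n)
    rw [hy_succ, abs_mul, abs_of_pos (by linarith)]
    exact mul_le_of_le_one_left (abs_nonneg _) (by linarith)
  refine ⟨_, abs_le_max_of_abs_succ_le hs0 hs1 (C := |y 0|) fun n => ?_⟩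
  calc |x (n + 1)| = |s * x n + y n| := by simp only [hy]; ring_nf
    _ ≤ s * |x n| + |y 0| := by
      grw [abs_add_le, abs_mul, abs_of_nonneg hs0, hy_le]

lemma exists_root_mem_Ico_of_le_quarter (ha : 0 ≤ a) (ha4 : a ≤ 1 / 4) :
    ∃ s : ℝ, s ^ 2 - s + a = 0 ∧ 0 ≤ s ∧ s < 1 := by
  have hd := Real.sq_sqrt (show 0 ≤ 1 - 4 * a by linarith)
  have hd0 := Real.sqrt_nonneg (1 - 4 * a)
  refine ⟨(1 - √(1 - 4 * a)) / 2, by linear_combination hd / 4, ?_, by linarith⟩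
  nlinarith

def energy (a : ℝ) (x : ℕ → ℝ) (n : ℕ) : ℝ :=
  x (n + 1) ^ 2 - x (n + 1) * x n + a * x n ^ 2

lemma energy_succ (hrec : ∀ n, x (n + 2) = x (n + 1) - a * x n) (n : ℕ) :
    energy a x (n + 1) = a * energy a x n := by
  simp only [energy, hrec n]
  ring

lemma four_mul_energy (n : ℕ) :
    4 * energy a x n = (2 * x (n + 1) - x n) ^ 2 + (4 * a - 1) * x n ^ 2 := by
  simp only [energy]
  ring

lemma exists_bound_of_quarter_lt (hrec : ∀ n, x (n + 2) = x (n + 1) - a * x n)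
    (ha4 : 1 / 4 < a) (ha1 : a ≤ 1) : ∃ M : ℝ, ∀ n, |x n| ≤ M := by
  have henergy_nonneg : ∀ n, 0 ≤ energy a x n := fun n => by
    nlinarith [four_mul_energy (a := a) (x := x) n, sq_nonneg (2 * x (n + 1) - x n),
      sq_nonneg (x n)]
  have henergy_le : ∀ n, energy a x n ≤ energy a x 0 := by
    refine fun n => antitone_nat_of_succ_le (f := energy a x) (fun n => ?_) (Nat.zero_le n)
    rw [energy_succ hrec]
    exact mul_le_of_le_one_left (henergy_nonneg n) ha1
  refine ⟨√(4 * energy a x 0 / (4 * a - 1)), fun n => Real.abs_le_sqrt ?_⟩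
  rw [le_div_iff₀ (by linarith)]
  nlinarith [four_mul_energy (a := a) (x := x) n, sq_nonneg (2 * x (n + 1) - x n), henergy_le n]

end Recurrence

theorem stmt_4 (a : ℝ) (ha : 0 < a) (ha1 : a ≤ 1) (x : ℕ → ℝ)
    (hx : ∀ n, 1 ≤ n → x (n + 1) = x n - a * x (n - 1)) :
    ∃ M : ℝ, ∀ n, |x n| ≤ M := by
  have hrec : ∀ n, x (n + 2) = x (n + 1) - a * x n := fun n => hx (n + 1) (by omega)
  rcases le_or_gt a (1 / 4) with ha4 | ha4
  · obtain ⟨s, hs, hs0, hs1⟩ := exists_root_mem_Ico_of_le_quarter ha.le ha4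
    exact exists_bound_of_root_mem_Ico hrec hs hs0 hs1
  · exact exists_bound_of_quarter_lt hrec ha4 ha1
end

section
/- Let x : ℝ → ℝ solve the system: x'(t) + x(t) = 0 on each interval [2k, 2k+1) for k ∈ ℕ, and x(2k+2) − x(2k+1) + x(−1) = 0 at the right endpoints (where x(2k+2) denotes the value at the next interval's start). Then x(2k) = e^{−k}·x(0) − (e/(e−1))·(1 − e^{−k})·x(−1) for all k ∈ ℕ, and if x(−1) ≠ 0 then limsup_{t→∞} |x(t)| = (e/(e−1))·|x(−1)| > 0. -/
/-!
On `[2k, 2k + 1]` the solution is `x t = x (2k) * exp (2k - t)`, so `|x|` is largest at the left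
endpoints and the jump condition turns into the affine recursion
`x (2k + 2) = e⁻¹ * x (2k) - x (-1)`. Solving it gives the formula, and `x (2k)` converges to the
fixed point `-e / (e - 1) * x (-1)`. The limsup of `|x|` along the time scale is then squeezed
between the values `|x (2k)|` and the step function `t ↦ |x (2 ⌊t / 2⌋)|` dominating `|x|`.
-/

open Filter Set Real Topology

lemma eq_mul_exp_sub_of_hasDerivWithinAt_neg {x : ℝ → ℝ} {a b : ℝ}
    (hx : ∀ t ∈ Icc a b, HasDerivWithinAt x (-x t) (Icc a b) t) {t : ℝ} (ht : t ∈ Icc a b) :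
    x t = x a * exp (a - t) := by
  -- `x t * exp t` has zero derivative, hence is constant.
  have hconst := constant_of_has_deriv_right_zero (f := fun s => x s * exp s)
    (fun s hs => (hx s hs).continuousWithinAt.mul continuous_exp.continuousWithinAt)
    (fun s hs => by
      have hd := (hx s (Ico_subset_Icc_self hs)).mul (hasDerivAt_exp s).hasDerivWithinAt
      rw [neg_mul, neg_add_cancel] at hd
      exact hd.mono_of_mem_nhdsWithin (Icc_mem_nhdsGE_of_mem hs)) t ht
  rw [exp_sub, mul_div_assoc', ← hconst, mul_div_cancel_right₀ _ (exp_ne_zero t)]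

lemma abs_le_abs_of_hasDerivWithinAt_neg {x : ℝ → ℝ} {a b : ℝ}
    (hx : ∀ t ∈ Icc a b, HasDerivWithinAt x (-x t) (Icc a b) t) {t : ℝ} (ht : t ∈ Icc a b) :
    |x t| ≤ |x a| := by
  rw [eq_mul_exp_sub_of_hasDerivWithinAt_neg hx ht, abs_mul, abs_exp]
  exact mul_le_of_le_one_right (abs_nonneg _) (exp_le_one_iff.mpr (by linarith [ht.1]))

lemma eq_exp_neg_mul_sub_of_succ_eq {u : ℕ → ℝ} {c : ℝ}
    (hu : ∀ k, u (k + 1) = exp (-1) * u k - c) (k : ℕ) :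
    u k = exp (-k) * u 0 - exp 1 / (exp 1 - 1) * (1 - exp (-k)) * c := by
  have he : exp 1 - 1 ≠ 0 := sub_ne_zero.mpr (one_lt_exp_iff.mpr one_pos).ne'
  induction k with
  | zero => simp
  | succ k ih =>
    rw [hu, ih, Nat.cast_succ, neg_add, exp_add, exp_neg 1]
    field_simp
    ring

lemma tendsto_of_succ_eq_exp_neg_mul_sub {u : ℕ → ℝ} {c : ℝ}
    (hu : ∀ k, u (k + 1) = exp (-1) * u k - c) :
    Tendsto u atTop (𝓝 (-(exp 1 / (exp 1 - 1) * c))) := by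
  have hexp : Tendsto (fun k : ℕ => exp (-k)) atTop (𝓝 0) :=
    tendsto_exp_atBot.comp (tendsto_neg_atTop_atBot.comp tendsto_natCast_atTop_atTop)
  have hlim := (hexp.mul_const (u 0)).sub
    ((((tendsto_const_nhds (x := (1 : ℝ))).sub hexp).const_mul (exp 1 / (exp 1 - 1))).mul_const c)
  rw [funext (eq_exp_neg_mul_sub_of_succ_eq hu)]
  simpa using hlim

lemma limsup_eq_of_eventually_le_of_tendsto {α β ι : Type*} [ConditionallyCompleteLinearOrder α]
    [TopologicalSpace α] [OrderTopology α] {F : Filter β} {l : Filter ι} [l.NeBot]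
    {f g : β → α} {u : ι → β} {a : α} (hfg : f ≤ᶠ[F] g) (hg : Tendsto g F (𝓝 a))
    (hu : Tendsto u l F) (hfu : Tendsto (f ∘ u) l (𝓝 a)) :
    limsup f F = a := by
  have : F.NeBot := hu.neBot
  have hbdd : F.IsBoundedUnder (· ≤ ·) f := hg.isBoundedUnder_le.mono_le hfg
  refine le_antisymm ?_ ?_
  · calc limsup f F ≤ limsup g F :=
          limsup_le_limsup hfg (hfu.isCoboundedUnder_le.mono (map_mono hu)) hg.isBoundedUnder_le
      _ = a := hg.limsup_eq
  · calc a = limsup (f ∘ u) l := hfu.limsup_eq.symm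
      _ ≤ limsup f F := hu.limsup_comp_le_limsup hfu.isCoboundedUnder_le hbdd

/-- The time scale `ℙ_{1,1}`. -/
def evenUnitIntervals : Set ℝ := ⋃ k : ℕ, Icc ((2 * k : ℕ) : ℝ) ((2 * k : ℕ) + 1)

lemma natFloor_half_eq_of_mem_Icc {k : ℕ} {t : ℝ}
    (ht : t ∈ Icc ((2 * k : ℕ) : ℝ) ((2 * k : ℕ) + 1)) : ⌊t / 2⌋₊ = k := by
  push_cast at ht
  rw [Nat.floor_eq_iff (by linarith [ht.1, k.cast_nonneg (α := ℝ)])]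
  constructor <;> linarith [ht.1, ht.2]

lemma tendsto_natFloor_half_atTop : Tendsto (fun t : ℝ => ⌊t / 2⌋₊) atTop atTop :=
  tendsto_nat_floor_atTop.comp (tendsto_id.atTop_div_const two_pos)

lemma tendsto_two_mul_natCast_evenUnitIntervals :
    Tendsto (fun k : ℕ => ((2 * k : ℕ) : ℝ)) atTop (atTop ⊓ 𝓟 evenUnitIntervals) :=
  tendsto_inf.mpr ⟨tendsto_natCast_atTop_atTop.comp (tendsto_id.const_mul_atTop' two_pos),
    tendsto_principal.mpr (.of_forall fun k => mem_iUnion.mpr ⟨k, left_mem_Icc.mpr (by linarith)⟩)⟩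

theorem stmt_10 (x : ℝ → ℝ)
    (hode : ∀ k : ℕ, ∀ t ∈ Set.Icc ((2 * k : ℕ) : ℝ) ((2 * k : ℕ) + 1),
      HasDerivWithinAt x (-(x t)) (Set.Icc ((2 * k : ℕ) : ℝ) ((2 * k : ℕ) + 1)) t)
    (hjump : ∀ k : ℕ, x ((2 * k : ℕ) + 2) - x ((2 * k : ℕ) + 1) + x (-1) = 0) :
    (∀ k : ℕ, x ((2 * k : ℕ) : ℝ) = Real.exp (-(k : ℝ)) * x 0
        - Real.exp 1 / (Real.exp 1 - 1) * (1 - Real.exp (-(k : ℝ))) * x (-1)) ∧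
      (x (-1) ≠ 0 →
        Filter.limsup (fun t => |x t|)
            (Filter.atTop ⊓ Filter.principal (⋃ k : ℕ, Set.Icc ((2 * k : ℕ) : ℝ) ((2 * k : ℕ) + 1)))
          = Real.exp 1 / (Real.exp 1 - 1) * |x (-1)|) := by
  set u : ℕ → ℝ := fun k => x ((2 * k : ℕ) : ℝ) with hu
  have hstep : ∀ k, u (k + 1) = exp (-1) * u k - x (-1) := by
    intro k
    have hdecay : x ((2 * k : ℕ) + 1) = u k * exp (-1) := by
      rw [eq_mul_exp_sub_of_hasDerivWithinAt_neg (hode k) (right_mem_Icc.mpr (by linarith)),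
        sub_add_cancel_left]
    have hcast : ((2 * (k + 1) : ℕ) : ℝ) = (2 * k : ℕ) + 2 := by push_cast; ring
    simp only [hu, hcast]
    linarith [hjump k]
  have hu0 : u 0 = x 0 := by simp only [hu, mul_zero, Nat.cast_zero]
  refine ⟨fun k => hu0 ▸ eq_exp_neg_mul_sub_of_succ_eq hstep k, fun _ => ?_⟩
  have hlim : Tendsto (fun k => |u k|) atTop (𝓝 (exp 1 / (exp 1 - 1) * |x (-1)|)) := by
    have hpos : 0 < exp 1 / (exp 1 - 1) :=
      div_pos (exp_pos 1) (sub_pos.mpr (one_lt_exp_iff.mpr one_pos))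
    simpa only [abs_neg, abs_mul, abs_of_pos hpos] using (tendsto_of_succ_eq_exp_neg_mul_sub hstep).abs
  refine limsup_eq_of_eventually_le_of_tendsto (g := fun t => |u ⌊t / 2⌋₊|) ?_
    (hlim.comp (tendsto_natFloor_half_atTop.mono_left inf_le_left))
    tendsto_two_mul_natCast_evenUnitIntervals hlim
  refine eventually_inf_principal.mpr (.of_forall fun t ht => ?_)
  obtain ⟨k, hk⟩ := mem_iUnion.mp ht
  show |x t| ≤ |u ⌊t / 2⌋₊|
  rw [natFloor_half_eq_of_mem_Icc hk]
  exact abs_le_abs_of_hasDerivWithinAt_neg (hode k) hk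
end

section
/- Let A : ℕ → ℝ be nonnegative, let α(n) = n − 2, and suppose sup_n (A(n-1) + A(n-2)) < 1 and ∑ A(n) = ∞. Then every solution of x(n+1) − x(n) + A(n)·x(n-2) = 0 converges to 0 as n → ∞. -/
/-!
If `x` is eventually of one sign, say `x ≥ 0`, the equation makes it eventually nonincreasing, so it
converges to some `L ≥ 0`; then `x (n + 1) ≤ x n - L * A n`, and `∑ A n = ∞` forces `L = 0`.

Otherwise `x` changes sign infinitely often. After a last nonpositive value `x m`, the window bound
`A n + A (n + 1) ≤ c < 1` gives `x ≤ c * B` for the next three terms, where `B` bounds the earlier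
values of `|x|`, and afterwards `x` decreases as long as it stays positive. So past a sign change of
each kind every bound `B` on `|x|` improves to `c * B`, and iterating gives `|x n| ≤ c ^ j * B → 0`.
-/

open Filter Finset Topology

lemma exists_greatest_lt_of_exists {P : ℕ → Prop} {a n : ℕ} (h : ∃ m, a ≤ m ∧ m < n ∧ P m) :
    ∃ m, a ≤ m ∧ m < n ∧ P m ∧ ∀ k, m < k → k < n → ¬ P k := by
  classical
  obtain ⟨m, ham, hmn, hPm⟩ := h
  have hspec := Nat.findGreatest_spec (P := fun k => a ≤ k ∧ P k) (n := n - 1)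
    (show m ≤ n - 1 by omega) ⟨ham, hPm⟩
  have hle := Nat.findGreatest_le (P := fun k => a ≤ k ∧ P k) (n - 1)
  refine ⟨_, hspec.1, by omega, hspec.2, fun k hk hkn hPk => ?_⟩
  exact Nat.findGreatest_is_greatest hk (by omega) ⟨by omega, hPk⟩

/-- The equation `x (n + 1) - x n + A n * x (n - 2) = 0` for `n ≥ 2`, indexed from `n - 2` so that
no truncated subtraction occurs. -/
def SolvesDelayRecurrence (A x : ℕ → ℝ) : Prop :=
  ∀ n, x (n + 3) = x (n + 2) - A (n + 2) * x n

namespace SolvesDelayRecurrence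

variable {A x : ℕ → ℝ} {c : ℝ}

lemma neg (hx : SolvesDelayRecurrence A x) : SolvesDelayRecurrence A (-x) := fun n => by
  simp only [Pi.neg_apply, hx n]
  ring

lemma succ_le (hx : SolvesDelayRecurrence A x) (hA : ∀ n, 0 ≤ A n) {n : ℕ} (h : 0 ≤ x n) :
    x (n + 3) ≤ x (n + 2) := by
  rw [hx n]
  linarith [mul_nonneg (hA (n + 2)) h]

lemma le_of_nonneg_Ico (hx : SolvesDelayRecurrence A x) (hA : ∀ n, 0 ≤ A n) {m n : ℕ}
    (hmn : m ≤ n) (hpos : ∀ k ∈ Ico m n, 0 ≤ x k) : x (n + 2) ≤ x (m + 2) := by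
  induction n, hmn using Nat.le_induction with
  | base => rfl
  | succ n hmn ih =>
    have hn : 0 ≤ x n := hpos n (mem_Ico.mpr ⟨hmn, n.lt_succ_self⟩)
    have hprev := ih fun k hk => hpos k (Ico_subset_Ico_right n.le_succ hk)
    exact (hx.succ_le hA hn).trans hprev

lemma mul_sum_Ico_le (hx : SolvesDelayRecurrence A x) (hA : ∀ n, 0 ≤ A n) {L : ℝ} {m n : ℕ}
    (hmn : m ≤ n) (hL : ∀ k ∈ Ico m n, L ≤ x k) :
    L * ∑ k ∈ Ico (m + 2) (n + 2), A k ≤ x (m + 2) - x (n + 2) := by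
  induction n, hmn using Nat.le_induction with
  | base => simp
  | succ n hmn ih =>
    have hn : L ≤ x n := hL n (mem_Ico.mpr ⟨hmn, n.lt_succ_self⟩)
    have hprev := ih fun k hk => hL k (Ico_subset_Ico_right n.le_succ hk)
    rw [show n + 1 + 2 = n + 2 + 1 by ring, sum_Ico_succ_top (by omega), mul_add, hx n]
    linarith [mul_le_mul_of_nonneg_left hn (hA (n + 2))]

theorem tendsto_zero_of_eventually_nonneg (hx : SolvesDelayRecurrence A x)
    (hA : ∀ n, 0 ≤ A n) (hdiv : Tendsto (fun N => ∑ n ∈ range N, A n) atTop atTop)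
    (hpos : ∀ᶠ n in atTop, 0 ≤ x n) : Tendsto x atTop (𝓝 0) := by
  obtain ⟨N, hN⟩ := eventually_atTop.mp hpos
  set y : ℕ → ℝ := fun k => x (k + (N + 2))
  have hy : Antitone y := antitone_nat_of_succ_le fun k => by
    simpa only [y, show k + 1 + (N + 2) = k + N + 3 by ring, show k + (N + 2) = k + N + 2 by ring]
      using hx.succ_le hA (hN (k + N) (by omega))
  have hy0 : ∀ k, 0 ≤ y k := fun k => hN _ (by omega)
  have hlim := tendsto_atTop_ciInf hy ⟨0, by rintro _ ⟨k, rfl⟩; exact hy0 k⟩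
  set L := ⨅ k, y k
  suffices hL : L = 0 by
    rw [hL] at hlim
    exact (tendsto_add_atTop_iff_nat (N + 2)).mp hlim
  by_contra hL
  have hLpos : 0 < L := (ge_of_tendsto' hlim hy0).lt_of_ne' hL
  have hxL : ∀ k, N + 2 ≤ k → L ≤ x k := fun k hk => by
    simpa only [y, Nat.sub_add_cancel hk] using hy.le_of_tendsto hlim (k - (N + 2))
  have hsum : ∀ n, N + 2 ≤ n →
      ∑ k ∈ range (n + 2), A k ≤ ∑ k ∈ range (N + 4), A k + x (N + 4) / L := fun n hn => by
    have h := hx.mul_sum_Ico_le hA hn fun k hk => hxL k (mem_Ico.mp hk).1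
    rw [← sum_range_add_sum_Ico _ (show N + 4 ≤ n + 2 by omega)]
    have hxn : 0 ≤ x (n + 2) := hN _ (by omega)
    have : ∑ k ∈ Ico (N + 4) (n + 2), A k ≤ x (N + 4) / L := by
      rw [le_div_iff₀ hLpos]
      linarith
    linarith
  obtain ⟨n, hgt, hn⟩ := (((tendsto_add_atTop_iff_nat 2).mpr hdiv).eventually_gt_atTop
    (∑ k ∈ range (N + 4), A k + x (N + 4) / L) |>.and (eventually_ge_atTop (N + 2))).exists
  exact (hsum n hn).not_gt hgt

lemma le_mul_of_last_nonpos (hx : SolvesDelayRecurrence A x) (hA : ∀ n, 0 ≤ A n)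
    (hAc : ∀ n, A n + A (n + 1) ≤ c) (hc : c < 1) {B : ℝ} {m n : ℕ} (hmn : m + 2 < n)
    (hxm : x (m + 2) ≤ 0) (h0 : |x m| ≤ B) (h1 : |x (m + 1)| ≤ B)
    (hpos : ∀ k, m + 2 < k → k < n → 0 ≤ x k) : x n ≤ c * B := by
  have hB : 0 ≤ B := (abs_nonneg _).trans h0
  have hA2 : A (m + 2) ≤ c := by linarith [hAc (m + 2), hA (m + 3)]
  have hA4 : A (m + 4) ≤ 1 := by linarith [hAc (m + 4), hA (m + 5)]
  have p0 : A (m + 2) * -B ≤ A (m + 2) * x m :=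
    mul_le_mul_of_nonneg_left (neg_le_of_abs_le h0) (hA _)
  have p1 : A (m + 3) * -B ≤ A (m + 3) * x (m + 1) :=
    mul_le_mul_of_nonneg_left (neg_le_of_abs_le h1) (hA _)
  have p2 : (A (m + 2) + A (m + 3)) * B ≤ c * B := mul_le_mul_of_nonneg_right (hAc _) hB
  have p3 : x (m + 2) * (1 - A (m + 4)) ≤ 0 := mul_nonpos_of_nonpos_of_nonneg hxm (by linarith)
  have b3 : x (m + 3) ≤ c * B := by linarith [hx m, mul_le_mul_of_nonneg_right hA2 hB]
  have b4 : x (m + 4) ≤ c * B := by linarith [hx m, hx (m + 1)]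
  -- `x (m + 5) = (1 - A (m + 4)) * x (m + 2) - A (m + 2) * x m - A (m + 3) * x (m + 1)`
  have b5 : x (m + 5) ≤ c * B := by linarith [hx m, hx (m + 1), hx (m + 2)]
  obtain rfl | rfl | hn : n = m + 3 ∨ n = m + 4 ∨ m + 5 ≤ n := by omega
  · exact b3
  · exact b4
  obtain ⟨n, rfl⟩ : ∃ j, n = j + 2 := ⟨n - 2, by omega⟩
  refine (hx.le_of_nonneg_Ico hA (show m + 3 ≤ n by omega) fun k hk => ?_).trans b5
  obtain ⟨hk₁, hk₂⟩ := mem_Ico.mp hk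
  exact hpos k (by omega) (by omega)

lemma le_mul_of_exists_nonpos (hx : SolvesDelayRecurrence A x) (hA : ∀ n, 0 ≤ A n)
    (hAc : ∀ n, A n + A (n + 1) ≤ c) (hc : c < 1) {B : ℝ} {N n : ℕ}
    (hB : ∀ k, N ≤ k → k < n → |x k| ≤ B) (hneg : ∃ m, N + 2 ≤ m ∧ m < n ∧ x m ≤ 0) :
    x n ≤ c * B := by
  obtain ⟨m, hNm, hmn, hxm, hlast⟩ := exists_greatest_lt_of_exists hneg
  obtain ⟨m, rfl⟩ : ∃ j, m = j + 2 := ⟨m - 2, by omega⟩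
  exact hx.le_mul_of_last_nonpos hA hAc hc hmn hxm (hB _ (by omega) (by omega))
    (hB _ (by omega) (by omega)) fun k hmk hkn => (not_le.mp (hlast k hmk hkn)).le

lemma abs_le_mul_of_exists_sign_change (hx : SolvesDelayRecurrence A x) (hA : ∀ n, 0 ≤ A n)
    (hAc : ∀ n, A n + A (n + 1) ≤ c) (hc : c < 1) {B : ℝ} {N n : ℕ}
    (hB : ∀ k, N ≤ k → k < n → |x k| ≤ B) (hneg : ∃ m, N + 2 ≤ m ∧ m < n ∧ x m ≤ 0)
    (hpos : ∃ m, N + 2 ≤ m ∧ m < n ∧ 0 ≤ x m) : |x n| ≤ c * B := by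
  refine abs_le.mpr ⟨?_, hx.le_mul_of_exists_nonpos hA hAc hc hB hneg⟩
  have := hx.neg.le_mul_of_exists_nonpos hA hAc hc (by simpa using hB) (by simpa using hpos)
  rw [Pi.neg_apply] at this
  linarith

lemma exists_forall_abs_le (hx : SolvesDelayRecurrence A x) (hA : ∀ n, 0 ≤ A n)
    (hAc : ∀ n, A n + A (n + 1) ≤ c) (hc : c < 1) (hneg : ∃ᶠ n in atTop, x n ≤ 0)
    (hpos : ∃ᶠ n in atTop, 0 ≤ x n) : ∃ B, ∀ n, |x n| ≤ B := by
  obtain ⟨m, hm, hxm⟩ := frequently_atTop.mp hneg 2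
  obtain ⟨m', hm', hxm'⟩ := frequently_atTop.mp hpos 2
  set M := max m m' + 1
  set B := ∑ k ∈ range M, |x k|
  have hB0 : 0 ≤ B := sum_nonneg fun k _ => abs_nonneg (x k)
  refine ⟨B, fun n => ?_⟩
  induction n using Nat.strong_induction_on with
  | _ n ih =>
    rcases lt_or_ge n M with hn | hn
    · exact single_le_sum (fun k _ => abs_nonneg (x k)) (mem_range.mpr hn)
    · refine (hx.abs_le_mul_of_exists_sign_change hA hAc hc (N := 0) (fun k _ hk => ih k hk)
        ⟨m, hm, by omega, hxm⟩ ⟨m', hm', by omega, hxm'⟩).trans ?_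
      exact mul_le_of_le_one_left hB0 hc.le

lemma eventually_abs_le_mul (hx : SolvesDelayRecurrence A x) (hA : ∀ n, 0 ≤ A n)
    (hAc : ∀ n, A n + A (n + 1) ≤ c) (hc : c < 1) (hneg : ∃ᶠ n in atTop, x n ≤ 0)
    (hpos : ∃ᶠ n in atTop, 0 ≤ x n) {B : ℝ} (hB : ∀ᶠ n in atTop, |x n| ≤ B) :
    ∀ᶠ n in atTop, |x n| ≤ c * B := by
  obtain ⟨N, hN⟩ := eventually_atTop.mp hB
  obtain ⟨m, hm, hxm⟩ := frequently_atTop.mp hneg (N + 2)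
  obtain ⟨m', hm', hxm'⟩ := frequently_atTop.mp hpos (N + 2)
  filter_upwards [eventually_gt_atTop (max m m')] with n hn
  exact hx.abs_le_mul_of_exists_sign_change hA hAc hc (fun k hk _ => hN k hk)
    ⟨m, hm, by omega, hxm⟩ ⟨m', hm', by omega, hxm'⟩

theorem tendsto_zero_of_frequently_sign_change (hx : SolvesDelayRecurrence A x)
    (hA : ∀ n, 0 ≤ A n) (hAc : ∀ n, A n + A (n + 1) ≤ c) (hc : c < 1)
    (hneg : ∃ᶠ n in atTop, x n ≤ 0) (hpos : ∃ᶠ n in atTop, 0 ≤ x n) :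
    Tendsto x atTop (𝓝 0) := by
  obtain ⟨B, hB⟩ := hx.exists_forall_abs_le hA hAc hc hneg hpos
  have hc0 : 0 ≤ c := (add_nonneg (hA 0) (hA 1)).trans (hAc 0)
  have hpow : ∀ j : ℕ, ∀ᶠ n in atTop, |x n| ≤ c ^ j * B := by
    intro j
    induction j with
    | zero => simpa only [pow_zero, one_mul] using Eventually.of_forall hB
    | succ j ih =>
      rw [pow_succ', mul_assoc]
      exact hx.eventually_abs_le_mul hA hAc hc hneg hpos ih
  refine Metric.tendsto_nhds.mpr fun ε hε => ?_
  have hgeom := (tendsto_pow_atTop_nhds_zero_of_lt_one hc0 hc).mul_const B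
  obtain ⟨j, hj⟩ := (hgeom.eventually (gt_mem_nhds (by rwa [zero_mul]))).exists
  filter_upwards [hpow j] with n hn
  rw [Real.dist_0_eq_abs]
  exact hn.trans_lt hj

end SolvesDelayRecurrence

theorem stmt_16 (A x : ℕ → ℝ) (hA : ∀ n, 0 ≤ A n)
    (hsup : ∃ c : ℝ, c < 1 ∧ ∀ n, A (n - 1) + A (n - 2) ≤ c)
    (hdiv : Filter.Tendsto (fun N => ∑ n ∈ Finset.range N, A n) Filter.atTop Filter.atTop)
    (hx : ∀ n, 2 ≤ n → x (n + 1) - x n + A n * x (n - 2) = 0) :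
    Filter.Tendsto x Filter.atTop (nhds 0) := by
  obtain ⟨c, hc, hAc⟩ := hsup
  have hwindow : ∀ n, A n + A (n + 1) ≤ c := fun n => by
    have := hAc (n + 2)
    simp only [Nat.add_sub_cancel, Nat.add_succ_sub_one] at this
    linarith
  have hsol : SolvesDelayRecurrence A x := fun n => by
    have := hx (n + 2) (by omega)
    simp only [Nat.add_sub_cancel] at this
    linarith
  by_cases hpos : ∀ᶠ n in atTop, 0 ≤ x n
  · exact hsol.tendsto_zero_of_eventually_nonneg hA hdiv hpos
  by_cases hneg : ∀ᶠ n in atTop, x n ≤ 0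
  · simpa using (hsol.neg.tendsto_zero_of_eventually_nonneg hA hdiv (by simpa using hneg)).neg
  rw [not_eventually] at hpos hneg
  exact hsol.tendsto_zero_of_frequently_sign_change hA hwindow hc
    (hpos.mono fun n h => (not_le.mp h).le) (hneg.mono fun n h => (not_le.mp h).le)
end
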